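/- arXiv:2011.12153 — 4 statements merged into one kernel-verified Lean document; each statement's English description precedes it below -/
import Mathlib

section
/- If R is commutative and λ: R → S is a ring epimorphism, then S is commutative. -/
universe u

/-- A ring homomorphism is an epimorphism in the category of rings. -/
def IsRingEpi {R S : Type u} [Ring R] [Ring S] (f : R →+* S) : Prop :=
  ∀ ⦃T : Type u⦄ [Ring T], ∀ g h : S →+* T, g.comp f = h.comp f → g = h

/-- If `R` is commutative and `λ : R → S` is a ring epimorphism, then `S` is commutative. -/
theorem comm_of_ring_epi {R S : Type u} [CommRing R] [Ring S] (f : R →+* S)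
    (hf : IsRingEpi f) : ∀ a b : S, a * b = b * a := by
  -- Step 1: the image of `f` is central in `S`.
  have hcentral : ∀ r : R, ∀ x : S, f r * x = x * f r := by
    intro r
    set d : S → S := fun x => x * f r - f r * x with hd
    let g : S →+* TrivSqZeroExt S S := TrivSqZeroExt.inlHom S S
    let h : S →+* TrivSqZeroExt S S :=
      { toFun := fun x => ⟨x, d x⟩
        map_one' := by
          ext
          · rfl
          · simp [hd]
        map_mul' := fun x y => by
          ext
          · rfl
          · show d (x * y) = x • d y + MulOpposite.op y • d x
            simp only [hd, smul_eq_mul, MulOpposite.smul_eq_mul_unop,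
              MulOpposite.unop_op]
            noncomm_ring
        map_zero' := by
          ext
          · rfl
          · simp [hd]
        map_add' := fun x y => by
          ext
          · rfl
          · show d (x + y) = d x + d y
            simp only [hd]
            noncomm_ring }
    have hgh : g.comp f = h.comp f := by
      ext r'
      · rfl
      · show (0 : S) = d (f r')
        simp [hd, ← map_mul, mul_comm]
    have := hf g h hgh
    intro x
    have hx : g x = h x := by rw [this]
    have : (0 : S) = d x := congrArg TrivSqZeroExt.snd hx
    have := this.symm
    rw [hd] at this
    simp only [sub_eq_zero] at this
    exact this.symm
  -- Step 2: `S` is an `R`-algebra; use `S ⊗[R] S`.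
  letI : Algebra R S := f.toAlgebra' hcentral
  have halg : ∀ r : R, algebraMap R S r = f r := fun _ => rfl
  let g : S →+* TensorProduct R S S := Algebra.TensorProduct.includeLeftRingHom
  let h : S →+* TensorProduct R S S := (Algebra.TensorProduct.includeRight (R := R) (A := S) (B := S)).toRingHom
  have hgh : g.comp f = h.comp f := by
    ext r
    show f r ⊗ₜ[R] (1 : S) = (1 : S) ⊗ₜ[R] f r
    rw [← halg r, Algebra.algebraMap_eq_smul_one, TensorProduct.smul_tmul]
  have key := hf g h hgh
  intro a b
  have h1 : a ⊗ₜ[R] (1 : S) = (1 : S) ⊗ₜ[R] a := congrFun (congrArg DFunLike.coe key) a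
  have h2 : b ⊗ₜ[R] (1 : S) = (1 : S) ⊗ₜ[R] b := congrFun (congrArg DFunLike.coe key) b
  have hab : (a * b) ⊗ₜ[R] (1 : S) = (b * a) ⊗ₜ[R] (1 : S) := by
    calc (a * b) ⊗ₜ[R] (1 : S) = (a ⊗ₜ[R] (1 : S)) * (b ⊗ₜ[R] (1 : S)) := by
          rw [Algebra.TensorProduct.tmul_mul_tmul, mul_one]
      _ = (a ⊗ₜ[R] (1 : S)) * ((1 : S) ⊗ₜ[R] b) := by rw [h2]
      _ = a ⊗ₜ[R] b := by rw [Algebra.TensorProduct.tmul_mul_tmul, mul_one, one_mul]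
      _ = ((1 : S) ⊗ₜ[R] b) * (a ⊗ₜ[R] (1 : S)) := by
          rw [Algebra.TensorProduct.tmul_mul_tmul, mul_one, one_mul]
      _ = (b ⊗ₜ[R] (1 : S)) * (a ⊗ₜ[R] (1 : S)) := by rw [h2]
      _ = (b * a) ⊗ₜ[R] (1 : S) := by rw [Algebra.TensorProduct.tmul_mul_tmul, mul_one]
  have := congrArg (LinearMap.mul' R S) hab
  simpa using this
end

section
/- Let λ: R → S be a ring epimorphism. Then the essential image of restriction of scalars, i.e. the full subcategory of Mod R consisting of modules whose R-action extends to an S-action, is closed under products, coproducts, kernels and cokernels in Mod R. -/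
/-!
The heart of the matter is that restriction of scalars along a ring epimorphism `f : R → S` is
full: an `R`-linear map `g : M → N` between `S`-modules is `S`-linear. Indeed, `e (x, y) = (0, g x)`
is a square-zero endomorphism of `M × N`, so `1 + e` is a unit, and conjugating the action
`S → End (M × N)` by it gives a second ring homomorphism agreeing with the first on `R`. As `f` is
an epimorphism the two coincide, i.e. the action of `S` commutes with `e`, which is `S`-linearity
of `g`. Hence kernel and image of `g` are `S`-submodules, so kernel and cokernel carry
`S`-actions; products and direct sums carry the componentwise action.
-/

open DirectSum

universe u

/-- An `R`-module `X` lies in the essential image of restriction of scalars along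
`f : R →+* S` iff its `R`-action extends to an `S`-action compatible with `f`. -/
def ExtendsAlong {R S : Type u} [Ring R] [Ring S] (f : R →+* S)
    (X : Type u) [AddCommGroup X] [Module R X] : Prop :=
  ∃ m : Module S X, ∀ (r : R) (x : X), (letI : Module S X := m; f r • x) = r • x

section
variable {R S : Type u} [Ring R] [Ring S] {f : R →+* S}

theorem IsRingEpi.commute_of_isUnit (hf : IsRingEpi f) {A : Type u} [Ring A] (φ : S →+* A)
    {a : A} (ha : IsUnit a) (h : ∀ r, Commute (φ (f r)) a) (s : S) : Commute (φ s) a := by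
  obtain ⟨u, rfl⟩ := ha
  let conj : A →+* A := MulSemiringAction.toRingHom (ConjAct Aˣ) A (ConjAct.toConjAct u)
  have hconj : conj.comp φ = φ := by
    refine hf _ _ (RingHom.ext fun r => ?_)
    show u * φ (f r) * ↑u⁻¹ = φ (f r)
    rw [Units.mul_inv_eq_iff_eq_mul, (h r).eq]
  have hs : u * φ s * ↑u⁻¹ = φ s := congrArg (· s) hconj
  rw [Units.mul_inv_eq_iff_eq_mul] at hs
  exact hs.symm

theorem IsRingEpi.commute_of_isNilpotent (hf : IsRingEpi f) {A : Type u} [Ring A] (φ : S →+* A)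
    {a : A} (ha : IsNilpotent a) (h : ∀ r, Commute (φ (f r)) a) (s : S) : Commute (φ s) a := by
  have h_one_add := hf.commute_of_isUnit φ ha.isUnit_one_add
    (fun r => (Commute.one_right _).add_right (h r)) s
  simpa [Commute, SemiconjBy, mul_add, add_mul] using h_one_add

theorem IsRingEpi.map_smul_of_linearMap (hf : IsRingEpi f) {M N : Type u}
    [AddCommGroup M] [AddCommGroup N] [Module R M] [Module S M] [Module R N] [Module S N]
    (hM : ∀ (r : R) (x : M), f r • x = r • x) (hN : ∀ (r : R) (y : N), f r • y = r • y)
    (g : M →ₗ[R] N) (s : S) (x : M) : g (s • x) = s • g x := by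
  let φ := Module.toAddMonoidEnd S (M × N)
  have mul_apply (a b : AddMonoid.End (M × N)) (p : M × N) : (a * b) p = a (b p) := rfl
  have φ_apply (s : S) (p : M × N) : φ s p = (s • p.1, s • p.2) := rfl
  let e : AddMonoid.End (M × N) :=
    (AddMonoidHom.inr M N).comp (g.toAddMonoidHom.comp (AddMonoidHom.fst M N))
  have e_apply (p : M × N) : e p = (0, g p.1) := rfl
  have he : IsNilpotent e :=
    ⟨2, AddMonoid.End.ext _ fun p => by rw [pow_two, mul_apply, e_apply, e_apply]; simp⟩
  have hcomm := hf.commute_of_isNilpotent φ he (fun r => AddMonoid.End.ext _ fun p => by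
    rw [mul_apply, mul_apply, e_apply, φ_apply, φ_apply, e_apply]; simp [hM, hN]) s
  have hx := DFunLike.congr_fun hcomm.eq (x, 0)
  rw [mul_apply, mul_apply, e_apply, φ_apply, φ_apply, e_apply] at hx
  simpa using hx.symm

variable (f)

theorem extendsAlong_pi {ι : Type u} (X : ι → Type u) [∀ i, AddCommGroup (X i)]
    [∀ i, Module R (X i)] (h : ∀ i, ExtendsAlong f (X i)) : ExtendsAlong f (∀ i, X i) := by
  let (i : ι) : Module S (X i) := (h i).choose
  exact ⟨inferInstance, fun r x => funext fun i => (h i).choose_spec r (x i)⟩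

theorem extendsAlong_directSum {ι : Type u} (X : ι → Type u) [∀ i, AddCommGroup (X i)]
    [∀ i, Module R (X i)] (h : ∀ i, ExtendsAlong f (X i)) : ExtendsAlong f (⨁ i, X i) := by
  let (i : ι) : Module S (X i) := (h i).choose
  exact ⟨inferInstance, fun r x => DFinsupp.ext fun i => (h i).choose_spec r (x i)⟩

variable {f} {X : Type u} [AddCommGroup X] [Module R X] [Module S X]

theorem extendsAlong_submodule_of_smul_mem (hX : ∀ (r : R) (x : X), f r • x = r • x)
    (p : Submodule R X) (hp : ∀ (s : S) (x : X), x ∈ p → s • x ∈ p) : ExtendsAlong f p :=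
  let pS : Submodule S X := { p with smul_mem' := hp }
  ⟨pS.module, fun r x => Subtype.ext (hX r x)⟩

theorem extendsAlong_quotient_of_smul_mem (hX : ∀ (r : R) (x : X), f r • x = r • x)
    (p : Submodule R X) (hp : ∀ (s : S) (x : X), x ∈ p → s • x ∈ p) :
    ExtendsAlong f (X ⧸ p) := by
  let pS : Submodule S X := { p with smul_mem' := hp }
  refine ⟨(inferInstance : Module S (X ⧸ pS)), fun r q => ?_⟩
  obtain ⟨x, rfl⟩ := Submodule.Quotient.mk_surjective _ q
  exact congrArg (Submodule.Quotient.mk (p := p)) (hX r x)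

end

/-- Let `λ : R → S` be a ring epimorphism. The essential image of restriction of scalars
(modules whose `R`-action extends to an `S`-action) is closed under products,
coproducts, kernels and cokernels in `Mod R`. -/
theorem essImage_bireflective {R S : Type u} [Ring R] [Ring S] (f : R →+* S)
    (hf : IsRingEpi f) :
    (∀ (ι : Type u) (X : ι → Type u) [∀ i, AddCommGroup (X i)] [∀ i, Module R (X i)],
        (∀ i, ExtendsAlong f (X i)) → ExtendsAlong f (∀ i, X i)) ∧
    (∀ (ι : Type u) [DecidableEq ι] (X : ι → Type u) [∀ i, AddCommGroup (X i)]
        [∀ i, Module R (X i)],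
        (∀ i, ExtendsAlong f (X i)) → ExtendsAlong f (⨁ i, X i)) ∧
    (∀ (X Y : Type u) [AddCommGroup X] [AddCommGroup Y] [Module R X] [Module R Y],
        ExtendsAlong f X → ExtendsAlong f Y → ∀ g : X →ₗ[R] Y,
          ExtendsAlong f ↥(LinearMap.ker g) ∧ ExtendsAlong f (Y ⧸ LinearMap.range g)) := by
  refine ⟨fun _ X _ _ => extendsAlong_pi f X, fun _ _ X _ _ => extendsAlong_directSum f X, ?_⟩
  rintro X Y _ _ _ _ ⟨mX, hX⟩ ⟨mY, hY⟩ g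
  let := mX
  let := mY
  have hg := hf.map_smul_of_linearMap hX hY g
  refine ⟨extendsAlong_submodule_of_smul_mem hX _ fun s x hx => ?_,
    extendsAlong_quotient_of_smul_mem hY _ ?_⟩
  · rw [LinearMap.mem_ker, hg, LinearMap.mem_ker.mp hx, smul_zero]
  · rintro s _ ⟨x, rfl⟩
    exact ⟨s • x, hg s x⟩
end

section
/- Let T be a right R-module with Gen T = T^{⊥₁}. Then Add T = Gen T ∩ ^{⊥₁}(Gen T), i.e. a module M lies in Add T if and only if M is generated by T and Ext^1_R(M, N) = 0 for all T-generated modules N. -/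
universe u

/-- `Ext^1_R(M, X) = 0`, expressed by the splitting of all short exact sequences
`0 → X → Y → M → 0`. -/
def Ext1Zero (R : Type u) [Ring R] (M X : Type u) [AddCommGroup M] [Module R M]
    [AddCommGroup X] [Module R X] : Prop :=
  ∀ (Y : Type u) [AddCommGroup Y] [Module R Y] (i : X →ₗ[R] Y) (p : Y →ₗ[R] M),
    Function.Injective i → Function.Surjective p →
    LinearMap.range i = LinearMap.ker p →
    ∃ s : M →ₗ[R] Y, p.comp s = LinearMap.id

/-- `M ∈ Gen T`: `M` is an epimorphic image of a direct sum of copies of `T`. -/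
def MemGen (R : Type u) [Ring R] (T M : Type u) [AddCommGroup T] [Module R T]
    [AddCommGroup M] [Module R M] : Prop :=
  ∃ (ι : Type u) (g : (ι →₀ T) →ₗ[R] M), Function.Surjective g

/-- `M ∈ Add T`: `M` is a direct summand of a direct sum of copies of `T`. -/
def MemAdd (R : Type u) [Ring R] (T M : Type u) [AddCommGroup T] [Module R T]
    [AddCommGroup M] [Module R M] : Prop :=
  ∃ (ι : Type u) (s : M →ₗ[R] (ι →₀ T)) (p : (ι →₀ T) →ₗ[R] M), p.comp s = LinearMap.id

/-!
A summand of `T^(I)` lies in `Gen T`, and it lies in `^{⊥₁}(Gen T)` because `Ext¹(-, N)` vanishes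
on `T^(I)` as soon as it vanishes on `T` (i.e. for `N ∈ T^{⊥₁} = Gen T`) and passes to retracts.
Conversely, let `M ∈ Gen T` and let `G : T^(Hom(T, M)) → M` be the canonical surjection. Every map
`T → M` factors through `G` and `Ext¹(T, T^(Hom(T, M))) = 0`, so the long exact sequence gives
`Ext¹(T, ker G) = 0`, i.e. `ker G ∈ Gen T`. Hence `Ext¹(M, ker G) = 0`, `G` splits and `M` is a
summand of `T^(Hom(T, M))`.
-/

open LinearMap Function

section

variable {R K F Y Z : Type*} [Ring R] [AddCommGroup K] [Module R K] [AddCommGroup F] [Module R F]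
  [AddCommGroup Y] [Module R Y] [AddCommGroup Z] [Module R Z] (j : K →ₗ[R] F) (i : K →ₗ[R] Y)

abbrev Pushout := (F × Y) ⧸ range (j.prod (-i))

namespace Pushout

def inl : F →ₗ[R] Pushout j i := Submodule.mkQ _ ∘ₗ LinearMap.inl R F Y

def inr : Y →ₗ[R] Pushout j i := Submodule.mkQ _ ∘ₗ LinearMap.inr R F Y

theorem inl_apply_eq_inr_apply (k : K) : inl j i (j k) = inr j i (i k) := by
  refine (Submodule.Quotient.eq _).2 ⟨k, ?_⟩
  simp

theorem exists_inl_add_inr_eq (z : Pushout j i) : ∃ f y, inl j i f + inr j i y = z := by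
  obtain ⟨⟨f, y⟩, rfl⟩ := Submodule.mkQ_surjective _ z
  exact ⟨f, y, by simp [inl, inr, ← Submodule.Quotient.mk_add]⟩

theorem inl_injective (hi : Injective i) : Injective (inl j i) := by
  refine (injective_iff_map_eq_zero _).2 fun f hf => ?_
  obtain ⟨k, hk⟩ := (Submodule.Quotient.mk_eq_zero _).1 hf
  obtain rfl : k = 0 := hi (by simpa using congrArg Prod.snd hk)
  simpa using (congrArg Prod.fst hk).symm

theorem inr_injective (hj : Injective j) : Injective (inr j i) := by
  refine (injective_iff_map_eq_zero _).2 fun y hy => ?_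
  obtain ⟨k, hk⟩ := (Submodule.Quotient.mk_eq_zero _).1 hy
  obtain rfl : k = 0 := hj (by simpa using congrArg Prod.fst hk)
  simpa using (congrArg Prod.snd hk).symm

variable {j i}

def desc (a : F →ₗ[R] Z) (b : Y →ₗ[R] Z) (h : a ∘ₗ j = b ∘ₗ i) : Pushout j i →ₗ[R] Z :=
  Submodule.liftQ _ (a.coprod b) <| by
    rintro _ ⟨k, rfl⟩
    simpa [← sub_eq_add_neg, sub_eq_zero] using congr($h k)

variable (a : F →ₗ[R] Z) (b : Y →ₗ[R] Z)

@[simp]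
theorem desc_inl (h : a ∘ₗ j = b ∘ₗ i) (f : F) : desc a b h (inl j i f) = a f := by
  simp [desc, inl]

@[simp]
theorem desc_inr (h : a ∘ₗ j = b ∘ₗ i) (y : Y) : desc a b h (inr j i y) = b y := by
  simp [desc, inr]

theorem ker_desc_zero_left_le (h : 0 ∘ₗ j = b ∘ₗ i) (hb : ker b ≤ range i) :
    ker (desc 0 b h) ≤ range (inl j i) := by
  intro z hz
  obtain ⟨f, y, rfl⟩ := exists_inl_add_inr_eq j i z
  obtain ⟨k, rfl⟩ := hb (by simpa using hz)
  exact ⟨f + j k, by rw [map_add, inl_apply_eq_inr_apply]⟩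

theorem ker_desc_zero_right_le (h : a ∘ₗ j = 0 ∘ₗ i) (ha : ker a ≤ range j) :
    ker (desc a 0 h) ≤ range (inr j i) := by
  intro z hz
  obtain ⟨f, y, rfl⟩ := exists_inl_add_inr_eq j i z
  obtain ⟨k, rfl⟩ := ha (by simpa using hz)
  exact ⟨i k + y, by rw [map_add, inl_apply_eq_inr_apply]⟩

end Pushout

end

theorem LinearMap.exists_comp_eq_of_range_le {R M N Q : Type*} [Ring R] [AddCommGroup M]
    [Module R M] [AddCommGroup N] [Module R N] [AddCommGroup Q] [Module R Q]
    {f : N →ₗ[R] Q} (hf : Injective f) {g : M →ₗ[R] Q} (h : range g ≤ range f) :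
    ∃ e : M →ₗ[R] N, f ∘ₗ e = g :=
  ⟨(LinearEquiv.ofInjective f hf).symm ∘ₗ g.codRestrict _ fun m => h ⟨m, rfl⟩, by ext; simp⟩

namespace Ext1Zero

variable {R X N M : Type u} [Ring R] [AddCommGroup X] [Module R X] [AddCommGroup N] [Module R N]
  [AddCommGroup M] [Module R M]

/-- Pull the extension back along `φ` and split it. -/
theorem exists_lift (hX : Ext1Zero R X N) {Y : Type u} [AddCommGroup Y] [Module R Y]
    {i : N →ₗ[R] Y} {p : Y →ₗ[R] M} (hi : Injective i) (hp : Surjective p)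
    (hip : range i = ker p) (φ : X →ₗ[R] M) : ∃ ψ : X →ₗ[R] Y, p ∘ₗ ψ = φ := by
  let P : Submodule R (X × Y) := eqLocus (φ ∘ₗ fst R X Y) (p ∘ₗ snd R X Y)
  have hiP (n : N) : ((0 : X), i n) ∈ P := by
    have : i n ∈ ker p := hip ▸ mem_range_self i n
    simpa [P, eq_comm] using this
  let i' : N →ₗ[R] P := (LinearMap.inr R X Y ∘ₗ i).codRestrict P hiP
  let p' : P →ₗ[R] X := fst R X Y ∘ₗ P.subtype
  have hi' : Injective i' := fun a b hab => hi congr(($hab : X × Y).2)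
  have hp' : Surjective p' := fun x => by
    obtain ⟨y, hy⟩ := hp (φ x)
    exact ⟨⟨(x, y), hy.symm⟩, rfl⟩
  have hi'p' : range i' = ker p' := by
    ext ⟨⟨x, y⟩, hxy⟩
    constructor
    · rintro ⟨n, hn⟩
      exact congr(($hn : X × Y).1).symm
    · rintro (rfl : x = 0)
      obtain ⟨n, rfl⟩ := hip.ge (by simpa [P] using hxy.symm)
      exact ⟨n, rfl⟩
  obtain ⟨s, hs⟩ := hX P i' p' hi' hp' hi'p'
  refine ⟨snd R X Y ∘ₗ P.subtype ∘ₗ s, LinearMap.ext fun x => ?_⟩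
  have hsx : (s x : X × Y).1 = x := congr($hs x)
  simpa [hsx] using (mem_eqLocus.1 (s x).2).symm

theorem finsupp (ι : Type u) (h : Ext1Zero R X N) : Ext1Zero R (ι →₀ X) N := by
  intro Y _ _ i p hi hp hip
  choose ψ hψ using fun a : ι => h.exists_lift hi hp hip (Finsupp.lsingle a)
  refine ⟨Finsupp.lsum ℕ ψ, Finsupp.lhom_ext fun a x => ?_⟩
  simpa using congr($(hψ a) x)

theorem of_retract {F : Type u} [AddCommGroup F] [Module R F] (s : M →ₗ[R] F) (q : F →ₗ[R] M)
    (hqs : q ∘ₗ s = LinearMap.id) (hF : Ext1Zero R F N) : Ext1Zero R M N := by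
  intro Y _ _ i p hi hp hip
  obtain ⟨ψ, hψ⟩ := hF.exists_lift hi hp hip q
  exact ⟨ψ ∘ₗ s, by rw [← LinearMap.comp_assoc, hψ, hqs]⟩

/-- The part `Hom(T, F) → Hom(T, M) → Ext¹(T, ker g) → Ext¹(T, F)` of the long exact sequence:
an extension of `T` by `ker g` is pushed out to a split extension of `T` by `F`, and the
splitting, corrected through `g`, descends to the original extension. -/
theorem ker_of_forall_exists_comp_eq {T F : Type u} [AddCommGroup T] [Module R T]
    [AddCommGroup F] [Module R F] (hF : Ext1Zero R T F) (g : F →ₗ[R] M)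
    (hg : ∀ h : T →ₗ[R] M, ∃ e : T →ₗ[R] F, g ∘ₗ e = h) : Ext1Zero R T (ker g) := by
  intro Y _ _ i p hi hp hip
  set j := (ker g).subtype
  have hpi : 0 ∘ₗ j = p ∘ₗ i := LinearMap.ext fun k => (hip.le (mem_range_self i k)).symm
  have hgj : g ∘ₗ j = 0 ∘ₗ i := LinearMap.ext fun k => k.2
  set π := Pushout.desc 0 p hpi
  set ρ := Pushout.desc g 0 hgj
  have hπ : Surjective π := fun t => by
    obtain ⟨y, rfl⟩ := hp t
    exact ⟨Pushout.inr j i y, by simp [π]⟩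
  have hinl : range (Pushout.inl j i) = ker π :=
    le_antisymm (range_le_ker_iff.2 (LinearMap.ext fun f => by simp [π]))
      (Pushout.ker_desc_zero_left_le p hpi hip.ge)
  obtain ⟨σ, hσ⟩ := hF _ (Pushout.inl j i) π (Pushout.inl_injective j i hi) hπ hinl
  obtain ⟨e, he⟩ := hg (ρ ∘ₗ σ)
  have hδ : range (σ - Pushout.inl j i ∘ₗ e) ≤ range (Pushout.inr j i) := by
    rintro _ ⟨t, rfl⟩
    refine Pushout.ker_desc_zero_right_le g hgj (Submodule.range_subtype _).ge ?_
    simpa [ρ, sub_eq_zero] using congr($he t).symm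
  obtain ⟨τ, hτ⟩ :=
    exists_comp_eq_of_range_le (Pushout.inr_injective j i (ker g).injective_subtype) hδ
  refine ⟨τ, ?_⟩
  calc p ∘ₗ τ = π ∘ₗ (Pushout.inr j i ∘ₗ τ) := LinearMap.ext fun t => by simp [π]
    _ = LinearMap.id := by
      rw [hτ, comp_sub, hσ, ← LinearMap.comp_assoc, range_le_ker_iff.1 hinl.le, zero_comp,
        sub_zero]

end Ext1Zero

theorem MemAdd.memGen {R T M : Type u} [Ring R] [AddCommGroup T] [Module R T] [AddCommGroup M]
    [Module R M] (h : MemAdd R T M) : MemGen R T M := by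
  obtain ⟨ι, s, q, hqs⟩ := h
  exact ⟨ι, q, fun m => ⟨s m, congr($hqs m)⟩⟩

theorem MemAdd.ext1Zero {R T M N : Type u} [Ring R] [AddCommGroup T] [Module R T]
    [AddCommGroup M] [Module R M] [AddCommGroup N] [Module R N] (h : MemAdd R T M)
    (hT : Ext1Zero R T N) : Ext1Zero R M N := by
  obtain ⟨ι, s, q, hqs⟩ := h
  exact (hT.finsupp ι).of_retract s q hqs

section EvalSum

variable (R T M : Type*) [Ring R] [AddCommGroup T] [Module R T] [AddCommGroup M] [Module R M]

noncomputable def evalSum : ((T →ₗ[R] M) →₀ T) →ₗ[R] M := Finsupp.lsum ℕ id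

variable {R T M}

theorem evalSum_comp_lsingle (f : T →ₗ[R] M) : evalSum R T M ∘ₗ Finsupp.lsingle f = f :=
  LinearMap.ext fun t => by simp [evalSum]

end EvalSum

theorem MemGen.evalSum_surjective {R T M : Type u} [Ring R] [AddCommGroup T] [Module R T]
    [AddCommGroup M] [Module R M] (h : MemGen R T M) : Surjective (evalSum R T M) := by
  obtain ⟨ι, g, hg⟩ := h
  refine hg.forall.2 fun x => ?_
  induction x using Finsupp.induction_linear with
  | zero => exact ⟨0, by simp⟩
  | add a b ha hb => rw [map_add]; exact (range _).add_mem ha hb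
  | single a t => exact ⟨Finsupp.single (g ∘ₗ Finsupp.lsingle a) t, by simp [evalSum]⟩

/-- Let `T` be a tilting module, i.e. `Gen T = T^{⊥₁}`. Then
`Add T = Gen T ∩ ^{⊥₁}(Gen T)`: a module `M` lies in `Add T` iff `M` is generated by `T`
and `Ext^1_R(M, N) = 0` for every `T`-generated module `N`. -/
theorem addT_eq_genT_inter_perp {R : Type u} [Ring R] (T : Type u) [AddCommGroup T]
    [Module R T]
    (htilt : ∀ (N : Type u) [AddCommGroup N] [Module R N], MemGen R T N ↔ Ext1Zero R T N) :
    ∀ (M : Type u) [AddCommGroup M] [Module R M],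
      MemAdd R T M ↔
        (MemGen R T M ∧
          ∀ (N : Type u) [AddCommGroup N] [Module R N], MemGen R T N → Ext1Zero R M N) := by
  intro M _ _
  refine ⟨fun hM => ⟨hM.memGen, fun N _ _ hN => hM.ext1Zero ((htilt N).1 hN)⟩, ?_⟩
  rintro ⟨hgen, hperp⟩
  set G := evalSum R T M
  have hF : Ext1Zero R T ((T →ₗ[R] M) →₀ T) := (htilt _).1 ⟨_, LinearMap.id, surjective_id⟩
  have hK : MemGen R T (ker G) :=
    (htilt _).2 (hF.ker_of_forall_exists_comp_eq G fun h => ⟨_, evalSum_comp_lsingle h⟩)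
  obtain ⟨s, hs⟩ := hperp _ hK _ (ker G).subtype G (ker G).injective_subtype
    hgen.evalSum_surjective (ker G).range_subtype
  exact ⟨_, s, G, hs⟩
end

section
/- Let λ: R → S and λ': R → S' be ring epimorphisms of commutative rings with essential images of restriction of scalars X and X' in Mod R. Then an R-module lies in the essential image of restriction of scalars along the composite R → S ⊗_R S' if and only if it lies in both X and X', i.e. its R-module structure extends both to an S-module structure and to an S'-module structure. -/
/-!
If `R → S` is an epimorphism, the two inclusions `S ⇉ S ⊗[R] S` agree, so `s ⊗ 1 = 1 ⊗ s`.
Applying the `R`-bilinear map `(a, t) ↦ a • φ (t • x)` to this identity shows that every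
`R`-linear map between `S`-modules is `S`-linear; in particular the `S`-action on an `R`-module
commutes with every `R`-linear endomorphism, such as the action of an element of `S'`.
Two commuting compatible actions of `S` and `S'` are exactly an action of `S ⊗[R] S'`;
conversely, an `S ⊗[R] S'`-action restricts along both inclusions.
-/

open TensorProduct

universe u

theorem ExtendsAlong.of_comp {R S T X : Type u} [Ring R] [Ring S] [Ring T] [AddCommGroup X]
    [Module R X] {f : R →+* S} (g : S →+* T) (h : ExtendsAlong (g.comp f) X) :
    ExtendsAlong f X :=
  let ⟨m, hm⟩ := h
  ⟨letI := m; Module.compHom X g, hm⟩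

theorem extendsAlong_algebraMap_iff {R A X : Type u} [CommRing R] [Ring A] [Algebra R A]
    [AddCommGroup X] [Module R X] :
    ExtendsAlong (algebraMap R A) X ↔ ∃ _ : Module A X, IsScalarTower R A X := by
  refine ⟨fun ⟨m, hm⟩ => ⟨m, ⟨fun r a x => ?_⟩⟩, fun ⟨m, _⟩ => ⟨m, algebraMap_smul A⟩⟩
  rw [Algebra.smul_def, mul_smul, hm]

namespace IsRingEpi

variable {R S : Type u} [CommRing R] [CommRing S] [Algebra R S]

theorem tmul_one_eq_one_tmul (hepi : IsRingEpi (algebraMap R S)) (s : S) :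
    s ⊗ₜ[R] (1 : S) = 1 ⊗ₜ s := by
  have h : Algebra.TensorProduct.includeLeftRingHom =
      (Algebra.TensorProduct.includeRight : S →ₐ[R] S ⊗[R] S).toRingHom :=
    hepi _ _ (by ext r; simp)
  exact RingHom.congr_fun h s

theorem map_smul_of_linearMap_s19 (hepi : IsRingEpi (algebraMap R S))
    {X Y : Type u} [AddCommGroup X] [Module S X] [AddCommGroup Y] [Module S Y]
    [Module R X] [Module R Y] [IsScalarTower R S X] [IsScalarTower R S Y]
    (φ : X →ₗ[R] Y) (s : S) (x : X) : φ (s • x) = s • φ x := by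
  let b : S →ₗ[R] S →ₗ[R] Y := LinearMap.mk₂ R (fun a t => a • φ (t • x))
    (fun a₁ a₂ t => by simp [add_smul])
    (fun r a t => by simp [smul_assoc])
    (fun a t₁ t₂ => by simp [add_smul])
    (fun r a t => by rw [smul_assoc, map_smul, smul_comm r a])
  simpa [b] using congrArg (TensorProduct.lift b) (hepi.tmul_one_eq_one_tmul s).symm

theorem smulCommClass (hepi : IsRingEpi (algebraMap R S))
    {S' X : Type u} [CommRing S'] [Algebra R S'] [AddCommGroup X] [Module R X]
    [Module S X] [Module S' X] [IsScalarTower R S X] [IsScalarTower R S' X] :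
    SMulCommClass S S' X :=
  ⟨fun s s' x => (hepi.map_smul_of_linearMap_s19 (DistribSMul.toLinearMap R X s') s x).symm⟩

end IsRingEpi

theorem TensorProduct.Algebra.isScalarTower_module {R A B X : Type u} [CommRing R] [Ring A] [Ring B]
    [Algebra R A] [Algebra R B] [AddCommGroup X] [Module R X] [Module A X] [Module B X]
    [IsScalarTower R A X] [IsScalarTower R B X] [SMulCommClass A B X] :
    let _ := TensorProduct.Algebra.module (R := R) (A := A) (B := B) (M := X)
    IsScalarTower R (A ⊗[R] B) X := by
  intro
  refine ⟨fun r t x => t.induction_on (by simp) (fun a b => ?_) (fun t t' ht ht' => ?_)⟩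
  · rw [TensorProduct.smul_tmul', TensorProduct.Algebra.smul_def, TensorProduct.Algebra.smul_def,
      smul_assoc]
  · rw [smul_add, add_smul, add_smul, ht, ht', smul_add]

theorem essImage_pushout_eq_inter_general {R S S' : Type u} [CommRing R] [CommRing S] [CommRing S']
    [Algebra R S] [Algebra R S']
    (hepi : IsRingEpi (algebraMap R S)) :
    ∀ (X : Type u) [AddCommGroup X] [Module R X],
      ExtendsAlong (algebraMap R (S ⊗[R] S')) X ↔
        (ExtendsAlong (algebraMap R S) X ∧ ExtendsAlong (algebraMap R S') X) := by
  intro X _ _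
  constructor
  · intro h
    exact ⟨.of_comp ((Algebra.TensorProduct.includeLeft : S →ₐ[R] S ⊗[R] S') : S →+* S ⊗[R] S')
        (by rwa [AlgHom.comp_algebraMap]),
      .of_comp ((Algebra.TensorProduct.includeRight : S' →ₐ[R] S ⊗[R] S') : S' →+* S ⊗[R] S')
        (by rwa [AlgHom.comp_algebraMap])⟩
  · simp only [extendsAlong_algebraMap_iff]
    rintro ⟨⟨_, _⟩, ⟨_, _⟩⟩
    have := hepi.smulCommClass (S' := S') (X := X)
    exact ⟨TensorProduct.Algebra.module, TensorProduct.Algebra.isScalarTower_module⟩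

/-- Let `λ : R → S`, `λ' : R → S'` be ring epimorphisms of commutative rings. An `R`-module
lies in the essential image of restriction of scalars along the composite
`R → S ⊗[R] S'` iff it lies in both essential images, i.e. its `R`-module structure
extends both to an `S`-module structure and to an `S'`-module structure. -/
theorem essImage_pushout_eq_inter {R S S' : Type u} [CommRing R] [CommRing S] [CommRing S']
    [Algebra R S] [Algebra R S']
    (hepi : IsRingEpi (algebraMap R S)) (hepi' : IsRingEpi (algebraMap R S')) :
    ∀ (X : Type u) [AddCommGroup X] [Module R X],
      ExtendsAlong (algebraMap R (S ⊗[R] S')) X ↔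
        (ExtendsAlong (algebraMap R S) X ∧ ExtendsAlong (algebraMap R S') X) :=
  essImage_pushout_eq_inter_general hepi
end
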